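/- Let λ be a partition of 2p in which every part occurs with even multiplicity, and assume λ has distinct column lengths; let 0 = k_0 < k_1 < ⋯ < k_m be the column lengths of λ listed increasingly (each difference k_s − k_{s−1} is even). Then the number of connected components of Γ_DIII(λ;p,p) equals #syd_DIII(λ;p,p) (the graph has no edges) and equals ∏_{1 ≤ s ≤ m, λ_{k_s} even} (1 + (k_s − k_{s−1})/2). -/

import Mathlib

/-!
Distinct column lengths force the parts of `λ` to be exactly `1, …, m`, the part `m + 1 - s`
filling the rows `k_{s-1} < j ≤ k_s`; its multiplicity is therefore `k_s - k_{s-1}`.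

A DIII diagram has no freedom at an odd part `i` (`m_T⁺(i) = m(i)/2`), while at an even part `v`
the value `m_T⁺(v)` may be any even number up to `m(v)`: every such choice has signature `(p, p)`,
because rows of even length, and pairs of odd rows of opposite leading signs, carry as many `+`
as `-` boxes. This gives `∏_{v even} (m(v)/2 + 1)` diagrams. A move of the orbit graph changes
`m_T⁺` at two consecutive parts `j + 1, j`, or at the smallest part `1`, hence always at an odd
part: the graph has no edges.
-/

open Finset

/-- A partition of `n`, given by the function `l` listing its parts in weakly
decreasing order: `l j = λ_j` is the `j`-th part for `1 ≤ j ≤ len`, and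
`l j = 0` for `j > len`. -/
structure PartitionData : Type where
  l : ℕ → ℕ
  len : ℕ
  anti : ∀ j, 1 ≤ j → l (j + 1) ≤ l j
  pos : ∀ j, 1 ≤ j → (0 < l j ↔ j ≤ len)

namespace PartitionData

/-- The multiplicity `m(i)` of `i` as a part of the partition. -/
def mult (P : PartitionData) (i : ℕ) : ℕ :=
  ((Finset.Icc 1 P.len).filter (fun j => P.l j = i)).card

/-- The finite set of (distinct) parts of the partition. -/
def partsSet (P : PartitionData) : Finset ℕ :=
  (Finset.Icc 1 P.len).image P.l

/-- The sum of the parts (i.e. the number `n` the partition partitions). -/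
def boxSum (P : PartitionData) : ℕ := ∑ j ∈ Finset.Icc 1 P.len, P.l j

/-- The number of odd parts of the partition. -/
def oddCount (P : PartitionData) : ℕ :=
  ((Finset.Icc 1 P.len).filter (fun j => Odd (P.l j))).card

end PartitionData

/-- A signed Young diagram of shape `P` and signature `(p, q)`, encoded by the
function `f` sending each part length `i` to `m_T⁺(i)`, the number of rows of
length `i` whose leading sign is `+`.  A row of length `i` with leading sign
`+` has `(i+1)/2` plus-boxes and `i/2` minus-boxes, and vice versa. -/
structure SYD (P : PartitionData) (p q : ℕ) : Type where
  f : ℕ → ℕ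
  le_mult : ∀ i, f i ≤ P.mult i
  plus_eq : ∑ i ∈ P.partsSet, (f i * ((i + 1) / 2) + (P.mult i - f i) * (i / 2)) = p
  minus_eq : ∑ i ∈ P.partsSet, (f i * (i / 2) + (P.mult i - f i) * ((i + 1) / 2)) = q

/-- `i` and `j` are consecutive distinct parts: `i > j` with no part strictly
in between (so if the distinct parts are `i_1 > ⋯ > i_k`, the pairs are
`(i_r, i_{r+1})`). -/
def Consec (P : PartitionData) (i j : ℕ) : Prop :=
  i ∈ P.partsSet ∧ j ∈ P.partsSet ∧ j < i ∧ ∀ x ∈ P.partsSet, ¬ (j < x ∧ x < i)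

/-- `j` is the smallest part `i_k`. -/
def IsMinPart (P : PartitionData) (j : ℕ) : Prop :=
  j ∈ P.partsSet ∧ ∀ x ∈ P.partsSet, j ≤ x

/-- Adjacency of signed Young diagrams with step `c`:
`π(T) - π(T') ∈ {±c(e_r - e_{r+1})} ∪ {±c e_k}` in the coordinates indexed by
the distinct parts `i_1 > ⋯ > i_k`. -/
def AdjRel (P : PartitionData) {p q : ℕ} (c : ℕ) (T T' : SYD P p q) : Prop :=
  (∃ i j, Consec P i j ∧ (∀ x, x ≠ i → x ≠ j → T.f x = T'.f x) ∧
    ((T.f i = T'.f i + c ∧ T'.f j = T.f j + c) ∨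
      (T'.f i = T.f i + c ∧ T.f j = T'.f j + c)))
  ∨ (∃ j, IsMinPart P j ∧ (∀ x, x ≠ j → T.f x = T'.f x) ∧
      (T.f j = T'.f j + c ∨ T'.f j = T.f j + c))

/-- The orbit graph `Γ(λ;p,q)` (type AIII). -/
def orbitGraph (P : PartitionData) (p q : ℕ) : SimpleGraph (SYD P p q) :=
  SimpleGraph.fromRel (AdjRel P 1)

/-- Type BDI: `m_T⁺(i) = m(i)/2` for every even part length `i`. -/
def SYD.IsBDI {P : PartitionData} {p q : ℕ} (T : SYD P p q) : Prop :=
  ∀ i, Even i → 2 * T.f i = P.mult i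

/-- Type CI: `p = q` and `m_T⁺(i) = m(i)/2` for every odd part length `i`. -/
def SYD.IsCI {P : PartitionData} {p q : ℕ} (T : SYD P p q) : Prop :=
  p = q ∧ ∀ i, Odd i → 2 * T.f i = P.mult i

/-- Type CII: `p`, `q` even, `m_T⁺(i) = m(i)/2` for every even part length `i`,
and `m(i)`, `m_T⁺(i)` even for every odd part length `i`. -/
def SYD.IsCII {P : PartitionData} {p q : ℕ} (T : SYD P p q) : Prop :=
  Even p ∧ Even q ∧ (∀ i, Even i → 2 * T.f i = P.mult i) ∧
    ∀ i, Odd i → Even (P.mult i) ∧ Even (T.f i)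

/-- Type DIII: `p = q`, `m_T⁺(i) = m(i)/2` for every odd part length `i`, and
`m(i)`, `m_T⁺(i)` even for every even part length `i`. -/
def SYD.IsDIII {P : PartitionData} {p q : ℕ} (T : SYD P p q) : Prop :=
  p = q ∧ (∀ i, Odd i → 2 * T.f i = P.mult i) ∧
    ∀ i, Even i → Even (P.mult i) ∧ Even (T.f i)

/-- The orbit graph `Γ_X(λ;p,q)` on the vertices `syd_X(λ;p,q)` (given by the
predicate `Pr`), with step `c` (`c = 1` for X = BDI, CI and `c = 2` for
X = CII, DIII). -/
def orbitGraphX (P : PartitionData) (p q c : ℕ) (Pr : SYD P p q → Prop) :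
    SimpleGraph {T : SYD P p q // Pr T} :=
  SimpleGraph.fromRel (fun T T' => AdjRel P c T.1 T'.1)

/-- The set of column lengths of `λ`: those `h ≥ 1` with `λ_h - λ_{h+1} > 0`. -/
def colSet (P : PartitionData) : Finset ℕ :=
  (Finset.Icc 1 P.len).filter (fun h => P.l (h + 1) < P.l h)

lemma card_filter_le_eq_succ_add (S : Finset ℕ) (j : ℕ) :
    #{h ∈ S | j ≤ h} = #{h ∈ S | j + 1 ≤ h} + if j ∈ S then 1 else 0 := by
  rw [card_filter, card_filter, ← sum_ite_eq' S j (fun _ => 1), ← sum_add_distrib]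
  refine sum_congr rfl fun h _ => ?_
  split_ifs <;> omega

namespace PartitionData

variable (P : PartitionData)

lemma l_eq_zero_of_len_lt {j : ℕ} (hj : P.len < j) : P.l j = 0 := by
  have := P.pos j (by omega)
  omega

lemma mult_eq_zero_of_notMem_partsSet {i : ℕ} (hi : i ∉ P.partsSet) : P.mult i = 0 :=
  card_eq_zero.2 <| filter_eq_empty_iff.2 fun _ hj hji => hi (hji ▸ mem_image_of_mem P.l hj)

lemma sum_mult_mul_eq_boxSum : ∑ i ∈ P.partsSet, P.mult i * i = P.boxSum := by
  simp only [boxSum, sum_comp (fun i => i) P.l, smul_eq_mul, mult, partsSet]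

lemma l_eq_l_succ_add (hdist : ∀ j, 1 ≤ j → P.l j - P.l (j + 1) ≤ 1) {j : ℕ} (hj : 1 ≤ j) :
    P.l j = P.l (j + 1) + if j ∈ colSet P then 1 else 0 := by
  have hanti := P.anti j hj
  have hstep := hdist j hj
  by_cases hlen : j ≤ P.len
  · simp only [colSet, mem_filter, mem_Icc, hj, hlen, true_and]
    split_ifs <;> omega
  · have := P.l_eq_zero_of_len_lt (j := j) (by omega)
    simp only [colSet, mem_filter, mem_Icc, hlen, and_false, false_and, if_false]
    omega

lemma l_eq_card_colSet (hdist : ∀ j, 1 ≤ j → P.l j - P.l (j + 1) ≤ 1) {j : ℕ} (hj : 1 ≤ j) :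
    P.l j = #{h ∈ colSet P | j ≤ h} := by
  obtain ⟨n, hn⟩ : ∃ n, P.len < j + n := ⟨P.len + 1, by omega⟩
  induction n generalizing j with
  | zero =>
    rw [P.l_eq_zero_of_len_lt (by omega), eq_comm, card_eq_zero, filter_eq_empty_iff]
    intro h hh
    have := (mem_Icc.1 (mem_filter.1 hh).1).2
    omega
  | succ n ih =>
    rw [P.l_eq_l_succ_add hdist hj, ih (by omega) (by omega), card_filter_le_eq_succ_add (colSet P) j]

end PartitionData

lemma exists_mem_Ioc_of_le {k : ℕ → ℕ} {m j : ℕ} (hj : k 0 < j) (hjm : j ≤ k m) :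
    ∃ s ∈ Icc 1 m, j ∈ Ioc (k (s - 1)) (k s) := by
  classical
  have hex : ∃ s, j ≤ k s := ⟨m, hjm⟩
  have hpos : Nat.find hex ≠ 0 := fun h => by
    have := Nat.find_spec hex
    rw [h] at this
    omega
  have hprev := Nat.find_min hex (show Nat.find hex - 1 < Nat.find hex by omega)
  exact ⟨Nat.find hex, mem_Icc.2 ⟨by omega, Nat.find_min' hex hjm⟩,
    mem_Ioc.2 ⟨by omega, Nat.find_spec hex⟩⟩

section ColumnLengths

variable {P : PartitionData} {m : ℕ} {k : ℕ → ℕ}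

lemma l_eq_card_filter_le (hdist : ∀ j, 1 ≤ j → P.l j - P.l (j + 1) ≤ 1)
    (hkmono : StrictMonoOn k (Set.Icc 0 m)) (hkim : (Icc 1 m).image k = colSet P)
    {j : ℕ} (hj : 1 ≤ j) : P.l j = #{t ∈ Icc 1 m | j ≤ k t} := by
  rw [P.l_eq_card_colSet hdist hj, ← hkim, filter_image]
  refine card_image_of_injOn (hkmono.injOn.mono fun t ht => ?_)
  simp only [coe_filter, mem_Icc, Set.mem_ofPred_eq] at ht
  exact ⟨t.zero_le, ht.1.2⟩

lemma l_eq_of_mem_Ioc (hdist : ∀ j, 1 ≤ j → P.l j - P.l (j + 1) ≤ 1)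
    (hkmono : StrictMonoOn k (Set.Icc 0 m)) (hkim : (Icc 1 m).image k = colSet P)
    {s j : ℕ} (hs : s ∈ Icc 1 m) (hj : j ∈ Ioc (k (s - 1)) (k s)) : P.l j = m + 1 - s := by
  rw [mem_Icc] at hs
  rw [mem_Ioc] at hj
  have hmono := hkmono.monotoneOn
  have hfilter : {t ∈ Icc 1 m | j ≤ k t} = Icc s m := by
    ext t
    simp only [mem_filter, mem_Icc]
    constructor
    · rintro ⟨⟨-, htm⟩, hjt⟩
      refine ⟨?_, htm⟩
      by_contra hts
      have := hmono (a := t) (b := s - 1) ⟨t.zero_le, htm⟩ ⟨(s - 1).zero_le, by omega⟩ (by omega)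
      omega
    · rintro ⟨hst, htm⟩
      have := hmono (a := s) (b := t) ⟨s.zero_le, by omega⟩ ⟨t.zero_le, htm⟩ hst
      omega
  rw [l_eq_card_filter_le hdist hkmono hkim (by omega), hfilter, Nat.card_Icc]

lemma len_le_k (hdist : ∀ j, 1 ≤ j → P.l j - P.l (j + 1) ≤ 1)
    (hkmono : StrictMonoOn k (Set.Icc 0 m)) (hkim : (Icc 1 m).image k = colSet P) :
    P.len ≤ k m := by
  by_contra hlen
  have hpos := (P.pos (k m + 1) (by omega)).2 (by omega)
  rw [l_eq_card_filter_le hdist hkmono hkim (by omega), card_pos] at hpos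
  obtain ⟨t, ht⟩ := hpos
  simp only [mem_filter, mem_Icc] at ht
  have := hkmono.monotoneOn (a := t) (b := m) ⟨t.zero_le, ht.1.2⟩ ⟨m.zero_le, le_rfl⟩ ht.1.2
  omega

lemma mem_Icc_len_of_mem_Ioc (hdist : ∀ j, 1 ≤ j → P.l j - P.l (j + 1) ≤ 1)
    (hkmono : StrictMonoOn k (Set.Icc 0 m)) (hkim : (Icc 1 m).image k = colSet P)
    {s j : ℕ} (hs : s ∈ Icc 1 m) (hj : j ∈ Ioc (k (s - 1)) (k s)) : j ∈ Icc 1 P.len := by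
  have hl := l_eq_of_mem_Ioc hdist hkmono hkim hs hj
  rw [mem_Icc] at hs
  rw [mem_Ioc] at hj
  exact mem_Icc.2 ⟨by omega, (P.pos j (by omega)).1 (by omega)⟩

lemma l_eq_iff_mem_Ioc (hdist : ∀ j, 1 ≤ j → P.l j - P.l (j + 1) ≤ 1) (hk0 : k 0 = 0)
    (hkmono : StrictMonoOn k (Set.Icc 0 m)) (hkim : (Icc 1 m).image k = colSet P)
    {s j : ℕ} (hs : s ∈ Icc 1 m) (hj : j ∈ Icc 1 P.len) :
    P.l j = m + 1 - s ↔ j ∈ Ioc (k (s - 1)) (k s) := by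
  rw [mem_Icc] at hj
  obtain ⟨t, ht, hjt⟩ := exists_mem_Ioc_of_le (k := k) (by omega)
    (hj.2.trans (len_le_k hdist hkmono hkim))
  refine ⟨fun hl => ?_, l_eq_of_mem_Ioc hdist hkmono hkim hs⟩
  rw [l_eq_of_mem_Ioc hdist hkmono hkim ht hjt] at hl
  rw [mem_Icc] at hs ht
  obtain rfl : t = s := by omega
  exact hjt

lemma mult_eq_sub (hdist : ∀ j, 1 ≤ j → P.l j - P.l (j + 1) ≤ 1) (hk0 : k 0 = 0)
    (hkmono : StrictMonoOn k (Set.Icc 0 m)) (hkim : (Icc 1 m).image k = colSet P)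
    {s : ℕ} (hs : s ∈ Icc 1 m) : P.mult (m + 1 - s) = k s - k (s - 1) := by
  have hrows : {j ∈ Icc 1 P.len | P.l j = m + 1 - s} = Ioc (k (s - 1)) (k s) := by
    ext j
    simp only [mem_filter]
    exact ⟨fun ⟨hj, hl⟩ => (l_eq_iff_mem_Ioc hdist hk0 hkmono hkim hs hj).1 hl,
      fun hj => ⟨mem_Icc_len_of_mem_Ioc hdist hkmono hkim hs hj,
        l_eq_of_mem_Ioc hdist hkmono hkim hs hj⟩⟩
  rw [PartitionData.mult, hrows, Nat.card_Ioc]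

lemma self_mem_Ioc (hkmono : StrictMonoOn k (Set.Icc 0 m)) {s : ℕ} (hs : s ∈ Icc 1 m) :
    k s ∈ Ioc (k (s - 1)) (k s) := by
  rw [mem_Icc] at hs
  exact mem_Ioc.2 ⟨hkmono ⟨(s - 1).zero_le, by omega⟩ ⟨s.zero_le, hs.2⟩ (by omega), le_rfl⟩

lemma partsSet_eq_Icc (hdist : ∀ j, 1 ≤ j → P.l j - P.l (j + 1) ≤ 1) (hk0 : k 0 = 0)
    (hkmono : StrictMonoOn k (Set.Icc 0 m)) (hkim : (Icc 1 m).image k = colSet P) :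
    P.partsSet = Icc 1 m := by
  ext v
  simp only [PartitionData.partsSet, mem_image]
  constructor
  · rintro ⟨j, hj, rfl⟩
    rw [mem_Icc] at hj
    obtain ⟨t, ht, hjt⟩ := exists_mem_Ioc_of_le (k := k) (by omega)
      (hj.2.trans (len_le_k hdist hkmono hkim))
    rw [l_eq_of_mem_Ioc hdist hkmono hkim ht hjt]
    simp only [mem_Icc] at ht ⊢
    omega
  · intro hv
    have hs : m + 1 - v ∈ Icc 1 m := by simp only [mem_Icc] at hv ⊢; omega
    have hks := self_mem_Ioc hkmono hs
    refine ⟨k (m + 1 - v), mem_Icc_len_of_mem_Ioc hdist hkmono hkim hs hks, ?_⟩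
    rw [l_eq_of_mem_Ioc hdist hkmono hkim hs hks]
    simp only [mem_Icc] at hv
    omega

lemma prod_even_parts_eq_prod_columns (hdist : ∀ j, 1 ≤ j → P.l j - P.l (j + 1) ≤ 1)
    (hk0 : k 0 = 0) (hkmono : StrictMonoOn k (Set.Icc 0 m))
    (hkim : (Icc 1 m).image k = colSet P) :
    ∏ v ∈ P.partsSet with Even v, (P.mult v / 2 + 1) =
      ∏ s ∈ Icc 1 m with Even (P.l (k s)), (1 + (k s - k (s - 1)) / 2) := by
  have hl_eq {s} (hs : s ∈ Icc 1 m) : P.l (k s) = m + 1 - s :=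
    l_eq_of_mem_Ioc hdist hkmono hkim hs (self_mem_Ioc hkmono hs)
  rw [partsSet_eq_Icc hdist hk0 hkmono hkim]
  refine prod_nbij' (fun v => m + 1 - v) (fun s => m + 1 - s) ?_ ?_ ?_ ?_ ?_ <;>
    intro v hv <;> have hv' := mem_Icc.1 (mem_filter.1 hv).1
  · have hs : m + 1 - v ∈ Icc 1 m := mem_Icc.2 (by omega)
    rw [mem_filter, hl_eq hs, show m + 1 - (m + 1 - v) = v by omega]
    exact ⟨hs, (mem_filter.1 hv).2⟩
  · refine mem_filter.2 ⟨mem_Icc.2 (by omega), ?_⟩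
    rw [← hl_eq (mem_filter.1 hv).1]
    exact (mem_filter.1 hv).2
  · omega
  · omega
  · rw [← mult_eq_sub hdist hk0 hkmono hkim (mem_Icc.2 (by omega)),
      show m + 1 - (m + 1 - v) = v by omega]
    omega

end ColumnLengths

lemma SYD.ext {P : PartitionData} {p q : ℕ} {T T' : SYD P p q} (h : T.f = T'.f) : T = T' := by
  cases T
  cases T'
  subst h
  rfl

/-- `a` of the `b` rows of length `i` lead with `+`. -/
lemma two_mul_signed_boxes {a b i : ℕ} (hab : a ≤ b) (hbal : Even i ∨ 2 * a = b) :
    2 * (a * ((i + 1) / 2) + (b - a) * (i / 2)) = b * i ∧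
      2 * (a * (i / 2) + (b - a) * ((i + 1) / 2)) = b * i := by
  obtain ⟨d, rfl⟩ := Nat.exists_eq_add_of_le hab
  rw [Nat.add_sub_cancel_left]
  rcases Nat.even_or_odd' i with ⟨c, rfl | rfl⟩
  · rw [show (2 * c + 1) / 2 = c by omega, show 2 * c / 2 = c by omega]
    constructor <;> ring
  · obtain rfl : d = a := by
      rcases hbal with h | h
      · exact absurd h (Nat.not_even_iff_odd.2 (odd_two_mul_add_one c))
      · omega
    rw [show (2 * c + 1 + 1) / 2 = c + 1 by omega, show (2 * c + 1) / 2 = c by omega]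
    constructor <;> ring

section DIII

variable {P : PartitionData} {p : ℕ}

lemma sum_eq_of_two_mul_eq (hn : P.boxSum = p + p) {g : ℕ → ℕ}
    (hg : ∀ i, 2 * g i = P.mult i * i) : ∑ i ∈ P.partsSet, g i = p := by
  have h : 2 * ∑ i ∈ P.partsSet, g i = 2 * p := by
    rw [mul_sum, sum_congr rfl fun i _ => hg i, P.sum_mult_mul_eq_boxSum, hn, two_mul]
  omega

def SYD.ofBalanced (hn : P.boxSum = p + p) (f : ℕ → ℕ) (hle : ∀ i, f i ≤ P.mult i)
    (hodd : ∀ i, Odd i → 2 * f i = P.mult i) : SYD P p p where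
  f := f
  le_mult := hle
  plus_eq := sum_eq_of_two_mul_eq hn fun i =>
    (two_mul_signed_boxes (hle i) ((Nat.even_or_odd i).imp_right (hodd i))).1
  minus_eq := sum_eq_of_two_mul_eq hn fun i =>
    (two_mul_signed_boxes (hle i) ((Nat.even_or_odd i).imp_right (hodd i))).2

def diiiPlusCount (P : PartitionData) (g : {v // v ∈ P.partsSet.filter Even} → ℕ) (i : ℕ) : ℕ :=
  if h : i ∈ P.partsSet.filter Even then 2 * g ⟨i, h⟩ else P.mult i / 2

lemma diiiPlusCount_le {g : {v // v ∈ P.partsSet.filter Even} → ℕ}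
    (hg : ∀ v, g v ≤ P.mult v / 2) (i : ℕ) : diiiPlusCount P g i ≤ P.mult i := by
  unfold diiiPlusCount
  split_ifs with h
  · have : g ⟨i, h⟩ ≤ P.mult i / 2 := hg ⟨i, h⟩
    omega
  · exact Nat.div_le_self _ _

lemma two_mul_diiiPlusCount_of_odd (hmult : ∀ i, Even (P.mult i))
    (g : {v // v ∈ P.partsSet.filter Even} → ℕ) {i : ℕ} (hi : Odd i) :
    2 * diiiPlusCount P g i = P.mult i := by
  have hi' : i ∉ P.partsSet.filter Even := fun h => Nat.not_even_iff_odd.2 hi (mem_filter.1 h).2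
  obtain ⟨c, hc⟩ := hmult i
  rw [diiiPlusCount, dif_neg hi']
  omega

lemma even_diiiPlusCount_of_even (g : {v // v ∈ P.partsSet.filter Even} → ℕ) {i : ℕ}
    (hi : Even i) : Even (diiiPlusCount P g i) := by
  unfold diiiPlusCount
  split_ifs with h
  · exact even_two_mul _
  · rw [P.mult_eq_zero_of_notMem_partsSet fun h' => h (mem_filter.2 ⟨h', hi⟩)]
    exact Even.zero

lemma diiiPlusCount_eq_of_isDIII {q : ℕ} {T : SYD P p q} (hT : T.IsDIII) :
    diiiPlusCount P (fun v => T.f v / 2) = T.f := by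
  funext i
  unfold diiiPlusCount
  split_ifs with h
  · obtain ⟨c, hc⟩ := (hT.2.2 i (mem_filter.1 h).2).2
    show 2 * (T.f i / 2) = T.f i
    omega
  · rcases Nat.even_or_odd i with he | ho
    · have := T.le_mult i
      rw [P.mult_eq_zero_of_notMem_partsSet fun h' => h (mem_filter.2 ⟨h', he⟩)] at this ⊢
      omega
    · have := hT.2.1 i ho
      omega

def diiiEquiv (hn : P.boxSum = p + p) (hmult : ∀ i, Even (P.mult i)) :
    {T : SYD P p p // T.IsDIII} ≃ ((v : P.partsSet.filter Even) → Fin (P.mult v / 2 + 1)) where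
  toFun T v := ⟨T.1.f v / 2, Nat.lt_succ_of_le (Nat.div_le_div_right (T.1.le_mult v))⟩
  invFun g :=
    ⟨SYD.ofBalanced hn (diiiPlusCount P fun v => g v)
        (diiiPlusCount_le fun v => Nat.le_of_lt_succ (g v).2)
        (fun _ => two_mul_diiiPlusCount_of_odd hmult _),
      rfl, fun _ => two_mul_diiiPlusCount_of_odd hmult (fun v => g v),
      fun i hi => ⟨hmult i, even_diiiPlusCount_of_even (fun v => g v) hi⟩⟩
  left_inv T := Subtype.ext (SYD.ext (diiiPlusCount_eq_of_isDIII T.2))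
  right_inv g := funext fun v => Fin.ext (by simp [SYD.ofBalanced, diiiPlusCount, v.2])

theorem card_isDIII (hn : P.boxSum = p + p) (hmult : ∀ i, Even (P.mult i)) :
    Nat.card {T : SYD P p p // T.IsDIII} = ∏ v ∈ P.partsSet with Even v, (P.mult v / 2 + 1) := by
  rw [Nat.card_congr (diiiEquiv hn hmult), Nat.card_pi]
  simp only [Nat.card_eq_fintype_card, Fintype.card_fin]
  exact prod_coe_sort _ fun v => P.mult v / 2 + 1

end DIII

lemma not_adjRel_of_isDIII {P : PartitionData} {p q n : ℕ} (hparts : P.partsSet = Icc 1 n)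
    {T T' : SYD P p q} (hT : T.IsDIII) (hT' : T'.IsDIII) : ¬ AdjRel P 2 T T' := by
  have hfixed : ∀ i, Odd i → T.f i = T'.f i := fun i hi => by
    have := hT.2.1 i hi
    have := hT'.2.1 i hi
    omega
  rintro (⟨i, j, ⟨hi, hj, hji, hgap⟩, -, hmove⟩ | ⟨j, ⟨hj, hmin⟩, -, hmove⟩)
  · rw [hparts, mem_Icc] at hi hj
    obtain rfl : i = j + 1 := by
      by_contra hne
      exact hgap (j + 1) (by rw [hparts, mem_Icc]; omega) ⟨by omega, by omega⟩
    rcases Nat.even_or_odd j with he | ho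
    · have := hfixed (j + 1) he.add_one
      omega
    · have := hfixed j ho
      omega
  · rw [hparts, mem_Icc] at hj
    have := hmin 1 (by rw [hparts, mem_Icc]; omega)
    obtain rfl : j = 1 := by omega
    have := hfixed 1 odd_one
    omega

lemma orbitGraphX_isDIII_eq_bot {P : PartitionData} {p q n : ℕ}
    (hparts : P.partsSet = Icc 1 n) : orbitGraphX P p q 2 SYD.IsDIII = ⊥ := by
  ext T T'
  simp only [orbitGraphX, SimpleGraph.fromRel_adj, SimpleGraph.bot_adj, iff_false, not_and]
  rintro - (h | h)
  · exact not_adjRel_of_isDIII hparts T.2 T'.2 h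
  · exact not_adjRel_of_isDIII hparts T'.2 T.2 h

lemma SimpleGraph.card_connectedComponent_bot (V : Type*) :
    Nat.card (⊥ : SimpleGraph V).ConnectedComponent = Nat.card V :=
  Nat.card_congr (Equiv.ofBijective (SimpleGraph.connectedComponentMk ⊥)
    ⟨fun _ _ h => SimpleGraph.reachable_bot.1 (SimpleGraph.ConnectedComponent.exact h),
     fun c => c.exists_rep⟩).symm

/-- Type DIII: for `λ` a partition of `2p` with every part of even multiplicity
and with distinct column lengths `0 = k_0 < k_1 < ⋯ < k_m` (each difference
`k_s - k_{s-1}` is even), the graph `Γ_DIII(λ;p,p)` has no edges, so its number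
of connected components equals `#syd_DIII(λ;p,p)`, which is
`∏_{s : λ_{k_s} even} (1 + (k_s - k_{s-1})/2)`. -/
theorem stmt18 (P : PartitionData) (p m : ℕ) (k : ℕ → ℕ)
    (hn : P.boxSum = p + p)
    (hmult : ∀ i, Even (P.mult i))
    (hdist : ∀ j, 1 ≤ j → P.l j - P.l (j + 1) ≤ 1)
    (hk0 : k 0 = 0) (hkmono : StrictMonoOn k (Set.Icc 0 m))
    (hkim : (Finset.Icc 1 m).image k = colSet P) :
    (∀ s, 1 ≤ s → s ≤ m → Even (k s - k (s - 1))) ∧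
    orbitGraphX P p p 2 SYD.IsDIII = ⊥ ∧
    Nat.card (orbitGraphX P p p 2 SYD.IsDIII).ConnectedComponent =
      Nat.card {T : SYD P p p // T.IsDIII} ∧
    Nat.card {T : SYD P p p // T.IsDIII} =
      ∏ s ∈ (Finset.Icc 1 m).filter (fun s => Even (P.l (k s))),
        (1 + (k s - k (s - 1)) / 2) := by
  have hbot : orbitGraphX P p p 2 SYD.IsDIII = ⊥ :=
    orbitGraphX_isDIII_eq_bot (partsSet_eq_Icc hdist hk0 hkmono hkim)
  refine ⟨fun s hs1 hs2 => ?_, hbot, ?_, ?_⟩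
  · rw [← mult_eq_sub hdist hk0 hkmono hkim (mem_Icc.2 ⟨hs1, hs2⟩)]
    exact hmult _
  · rw [hbot]
    exact SimpleGraph.card_connectedComponent_bot _
  · rw [card_isDIII hn hmult]
    exact prod_even_parts_eq_prod_columns hdist hk0 hkmono hkim
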